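/- Let u > 0 and g_u(x) = exp(−u x). For every nonnegative integer k, the k-th Walsh coefficient ĝ_u(k) satisfies B_u · 2^{−μ_u(k)} ≤ ĝ_u(k) ≤ A_u · 2^{−μ_u(k)}, where A_u = (1 − exp(−u))/u and B_u = inf_{w≥1} ((1 − exp(−2^{-w}u))/(2^{-w}u)) · ∏_{i=1}^{w} (1 − exp(−2^{-i}u))/(2^{-i}u). Moreover, equality ĝ_u(0) = A_u · 2^{−μ_u(0)} holds at k = 0. -/

import Mathlib

/-!
On the two halves of `[0, 1)` the Walsh function satisfies `wal_k x = wal_{⌊k/2⌋} (2x)` and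
`wal_k x = ± wal_{⌊k/2⌋} (2x - 1)`, with the sign given by the lowest bit of `k`. For
`g_u x = exp (-u x)` both halves rescale to `g_{u/2}`, so
`ĝ_u(k) = ((1 ± e^{-u/2}) / 2) ĝ_{u/2}(⌊k/2⌋)`, and iterating over the `m` bits of `k` gives
`ĝ_u(k) = A_{u/2^m} ∏_{i<m} (1 ± e^{-u/2^{i+1}}) / 2`. The constant `A_u` factors in the same way
with all signs `+`, `B_u` is at most each of the terms `A_{u/2^w} ∏_{i<w} A_{u/2^{i+1}}` (also for
`w = 0`, as they decrease in `w`), and `2^{-μ_u(k)}` is the product of `u / 2^{i+2}` over the set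
bits `i` of `k`. Both bounds then reduce to factorwise comparisons, which follow from
`A_v · v / 2 = (1 - e^{-v}) / 2` and the trapezoidal bound `A_v ≤ (1 + e^{-v}) / 2`.
-/

open MeasureTheory

/-- The `i`-th binary digit (for `i ≥ 1`) of `x ∈ [0,1)` in the expansion
`x = Σ_{i ≥ 1} x_i 2^{-i}` with infinitely many digits equal to `0`. -/
noncomputable def binDigit (x : ℝ) (i : ℕ) : ℕ := (⌊x * 2 ^ i⌋).toNat % 2

/-- The `k`-th dyadic Walsh function on `[0,1)`:
`wal_k(x) = (-1)^{Σ_{i ≥ 1} κ_i x_i}` where `k = Σ κ_i 2^{i-1}`. -/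
noncomputable def walsh (k : ℕ) (x : ℝ) : ℝ :=
  ∏ i ∈ Finset.range k.size, if k.testBit i then (-1 : ℝ) ^ binDigit x (i + 1) else 1

/-- The `k`-th dyadic Walsh coefficient of `f : [0,1) → ℝ`. -/
noncomputable def walshCoeff (f : ℝ → ℝ) (k : ℕ) : ℝ :=
  ∫ x in (0:ℝ)..1, f x * walsh k x

/-- `μ_u(k) = Σ_{i ≥ 1} (i + 1 - log₂ u) κ_i`, for the binary digits `κ_i` of `k`. -/
noncomputable def muWeight (u : ℝ) (k : ℕ) : ℝ :=
  ∑ i ∈ Finset.range k.size, if k.testBit i then ((i : ℝ) + 2 - Real.logb 2 u) else 0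

/-- `A_u = (1 - exp (-u)) / u`. -/
noncomputable def Aconst (u : ℝ) : ℝ := (1 - Real.exp (-u)) / u

/-- `B_u = inf_{w ≥ 1} ((1-exp(-2^{-w}u))/(2^{-w}u)) ∏_{i=1}^w (1-exp(-2^{-i}u))/(2^{-i}u)`. -/
noncomputable def Bconst (u : ℝ) : ℝ :=
  ⨅ w : {w : ℕ // 1 ≤ w},
    ((1 - Real.exp (-((2:ℝ) ^ (-((w:ℕ):ℤ)) * u))) / ((2:ℝ) ^ (-((w:ℕ):ℤ)) * u))
      * ∏ i ∈ Finset.Icc 1 (w : ℕ),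
          (1 - Real.exp (-((2:ℝ) ^ (-(i:ℤ)) * u))) / ((2:ℝ) ^ (-(i:ℤ)) * u)

open Real Finset

lemma binDigit_two_mul (x : ℝ) (i : ℕ) : binDigit (2 * x) i = binDigit x (i + 1) := by
  simp only [binDigit, pow_succ']
  ring_nf

lemma binDigit_add_one {y : ℝ} (hy : 0 ≤ y) {i : ℕ} (hi : i ≠ 0) :
    binDigit (y + 1) i = binDigit y i := by
  have hfloor : ⌊(y + 1) * 2 ^ i⌋ = ⌊y * 2 ^ i⌋ + 2 ^ i := by
    rw [← Int.floor_add_intCast]; push_cast; ring_nf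
  have hnonneg : 0 ≤ ⌊y * 2 ^ i⌋ := Int.floor_nonneg.2 (by positivity)
  have heven : (2 : ℤ) ^ i % 2 = 0 := Int.emod_eq_zero_of_dvd (dvd_pow_self 2 hi)
  have hpos : (0 : ℤ) ≤ 2 ^ i := by positivity
  simp only [binDigit, hfloor]
  omega

lemma binDigit_one_of_lt_half {x : ℝ} (h0 : 0 ≤ x) (h1 : x < 1 / 2) : binDigit x 1 = 0 := by
  have : ⌊x * 2⌋ = 0 := Int.floor_eq_zero_iff.2 ⟨by positivity, by linarith⟩
  simp [binDigit, this]

lemma binDigit_one_of_half_le {x : ℝ} (h0 : 1 / 2 ≤ x) (h1 : x < 1) : binDigit x 1 = 1 := by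
  have : ⌊x * 2⌋ = 1 := Int.floor_eq_iff.2 ⟨by push_cast; linarith, by push_cast; linarith⟩
  simp [binDigit, this]

lemma Nat.size_eq_size_div_two_add_one {k : ℕ} (hk : k ≠ 0) : k.size = (k / 2).size + 1 := by
  conv_lhs => rw [← Nat.bit_bodd_div2 k]
  rw [Nat.size_bit (by rwa [Nat.bit_bodd_div2]), Nat.div2_val]

lemma measurable_walsh (k : ℕ) : Measurable (walsh k) := by
  refine Finset.measurable_prod _ fun i _ => ?_
  split_ifs
  swap
  · exact measurable_const
  have hdigit : Measurable fun x : ℝ => binDigit x (i + 1) :=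
    (measurable_of_countable fun n : ℤ => n.toNat % 2).comp (measurable_id.mul_const _).floor
  exact (measurable_of_countable fun n : ℕ => (-1 : ℝ) ^ n).comp hdigit

lemma norm_walsh_le (k : ℕ) (x : ℝ) : ‖walsh k x‖ ≤ 1 := by
  rw [walsh, norm_prod]
  exact Finset.prod_le_one (fun _ _ => norm_nonneg _) fun i _ => by split_ifs <;> simp

lemma walsh_eq_mul_walsh_div_two (k : ℕ) (x : ℝ) :
    walsh k x = (if k.testBit 0 then (-1) ^ binDigit x 1 else 1) * walsh (k / 2) (2 * x) := by
  rcases eq_or_ne k 0 with rfl | hk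
  · simp [walsh]
  rw [walsh, Nat.size_eq_size_div_two_add_one hk, prod_range_succ', mul_comm, walsh]
  congr 1
  refine prod_congr rfl fun i _ => ?_
  rw [Nat.testBit_div_two, binDigit_two_mul]

lemma walsh_add_one (k : ℕ) {y : ℝ} (hy : 0 ≤ y) : walsh k (y + 1) = walsh k y := by
  simp only [walsh, binDigit_add_one hy (Nat.succ_ne_zero _)]

lemma walsh_of_lt_half (k : ℕ) {x : ℝ} (h0 : 0 ≤ x) (h1 : x < 1 / 2) :
    walsh k x = walsh (k / 2) (2 * x) := by
  simp [walsh_eq_mul_walsh_div_two k x, binDigit_one_of_lt_half h0 h1]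

lemma walsh_of_half_le (k : ℕ) {x : ℝ} (h0 : 1 / 2 ≤ x) (h1 : x < 1) :
    walsh k x = (if k.testBit 0 then -1 else 1) * walsh (k / 2) (2 * x - 1) := by
  rw [walsh_eq_mul_walsh_div_two k x, binDigit_one_of_half_le h0 h1, pow_one,
    ← walsh_add_one (k / 2) (by linarith : 0 ≤ 2 * x - 1), sub_add_cancel]

lemma IntervalIntegrable.mul_walsh {f : ℝ → ℝ} {a b : ℝ} (hf : IntervalIntegrable f volume a b)
    (k : ℕ) : IntervalIntegrable (fun x => f x * walsh k x) volume a b :=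
  have hbdd : ∀ᵐ x ∂volume, ‖walsh k x‖ ≤ 1 := ae_of_all _ (norm_walsh_le k)
  ⟨hf.1.mul_bdd (measurable_walsh k).aestronglyMeasurable (ae_restrict_of_ae hbdd),
    hf.2.mul_bdd (measurable_walsh k).aestronglyMeasurable (ae_restrict_of_ae hbdd)⟩

lemma walshCoeff_const_mul (c : ℝ) (f : ℝ → ℝ) (k : ℕ) :
    walshCoeff (fun x => c * f x) k = c * walshCoeff f k := by
  simp only [walshCoeff, mul_assoc, intervalIntegral.integral_const_mul]

theorem walshCoeff_eq_halves {f : ℝ → ℝ} (hf : IntervalIntegrable f volume 0 1) (k : ℕ) :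
    walshCoeff f k = (walshCoeff (fun y => f (y / 2)) (k / 2)
      + (if k.testBit 0 then -1 else 1) * walshCoeff (fun y => f ((y + 1) / 2)) (k / 2)) / 2 := by
  set s : ℝ := if k.testBit 0 then -1 else 1
  set L := fun y => f (y / 2) * walsh (k / 2) y
  set R := fun y => f ((y + 1) / 2) * walsh (k / 2) y
  have hleft : ∫ x in (0 : ℝ)..1 / 2, f x * walsh k x = (∫ y in (0 : ℝ)..1, L y) / 2 := by
    rw [intervalIntegral.integral_congr_Ioo_of_le (by norm_num) (g := fun x => L (2 * x))
      fun x hx => by simp [L, walsh_of_lt_half k hx.1.le hx.2],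
      intervalIntegral.integral_comp_mul_left L two_ne_zero]
    norm_num [div_eq_inv_mul]
  have hright : ∫ x in (1 / 2 : ℝ)..1, f x * walsh k x = s * (∫ y in (0 : ℝ)..1, R y) / 2 := by
    rw [intervalIntegral.integral_congr_Ioo_of_le (by norm_num) (g := fun x => s * R (2 * x - 1))
      fun x hx => ?_, intervalIntegral.integral_const_mul,
      intervalIntegral.integral_comp_mul_sub R two_ne_zero]
    · norm_num [div_eq_inv_mul, mul_left_comm]
    · simp only [R, walsh_of_half_le k hx.1.le hx.2, s]; ring_nf
  have hfw := hf.mul_walsh k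
  have hsub : ∀ {c d : ℝ}, c ∈ Set.Icc 0 1 → d ∈ Set.Icc 0 1 →
      IntervalIntegrable (fun x => f x * walsh k x) volume c d := fun hc hd =>
    hfw.mono_set (Set.uIcc_subset_uIcc (by simpa [Set.uIcc_of_le]) (by simpa [Set.uIcc_of_le]))
  unfold walshCoeff
  rw [← intervalIntegral.integral_add_adjacent_intervals (b := 1 / 2)
    (hsub (by norm_num) (by norm_num)) (hsub (by norm_num) (by norm_num)), hleft, hright]
  ring

lemma Aconst_nonneg (v : ℝ) : 0 ≤ Aconst v := by
  rcases le_total 0 v with hv | hv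
  · exact div_nonneg (by simpa using exp_le_one_iff.2 (neg_nonpos.2 hv)) hv
  · exact div_nonneg_of_nonpos (by simpa using one_le_exp_iff.2 (neg_nonneg.2 hv)) hv

lemma Aconst_mul_half {v : ℝ} (hv : v ≠ 0) : Aconst v * (v / 2) = (1 - exp (-v)) / 2 := by
  rw [Aconst]
  field_simp

lemma Aconst_eq_Aconst_half_mul (v : ℝ) :
    Aconst v = Aconst (v / 2) * ((1 + exp (-(v / 2))) / 2) := by
  rcases eq_or_ne v 0 with rfl | hv
  · simp [Aconst]
  have hsq : exp (-v) = exp (-(v / 2)) * exp (-(v / 2)) := by rw [← exp_add]; ring_nf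
  rw [Aconst, Aconst, hsq]
  field_simp
  ring

lemma Aconst_eq_mul_prod (u : ℝ) (m : ℕ) :
    Aconst u = Aconst (u / 2 ^ m) * ∏ i ∈ range m, (1 + exp (-(u / 2 ^ (i + 1)))) / 2 := by
  induction m with
  | zero => simp
  | succ m ih =>
    rw [ih, Aconst_eq_Aconst_half_mul (u / 2 ^ m), prod_range_succ, div_div, ← pow_succ]
    ring

lemma integral_exp_neg_mul {u : ℝ} (hu : u ≠ 0) : ∫ x in (0 : ℝ)..1, exp (-u * x) = Aconst u := by
  rw [intervalIntegral.integral_comp_mul_left exp (neg_ne_zero.2 hu), integral_exp, Aconst]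
  simp only [inv_neg, mul_one, mul_zero, exp_zero, smul_eq_mul, neg_mul]
  field_simp
  ring

/-- `Aconst v = ∫₀¹ exp (-v x) dx`, and the chord of the convex integrand lies above it. -/
lemma Aconst_le (v : ℝ) : Aconst v ≤ (1 + exp (-v)) / 2 := by
  rcases eq_or_ne v 0 with rfl | hv
  · simp [Aconst]
  rw [← integral_exp_neg_mul hv]
  calc ∫ x in (0 : ℝ)..1, exp (-v * x) ≤ ∫ x in (0 : ℝ)..1, ((1 - x) + x * exp (-v)) := by
        refine intervalIntegral.integral_mono_on zero_le_one
          (Continuous.intervalIntegrable (by fun_prop) _ _)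
          (Continuous.intervalIntegrable (by fun_prop) _ _) fun x hx => ?_
        simpa [mul_comm] using convexOn_exp.2 (Set.mem_univ 0) (Set.mem_univ (-v))
          (sub_nonneg.2 hx.2) hx.1 (sub_add_cancel 1 x)
    _ = (1 + exp (-v)) / 2 := by
        rw [intervalIntegral.integral_add, intervalIntegral.integral_sub,
          intervalIntegral.integral_mul_const]
        · norm_num [integral_id]; ring
        all_goals exact Continuous.intervalIntegrable (by fun_prop) _ _

noncomputable def expFactor (b : Bool) (v : ℝ) : ℝ := (1 + (if b then -1 else 1) * exp (-v)) / 2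

lemma expFactor_nonneg {b : Bool} {v : ℝ} (hv : 0 ≤ v) : 0 ≤ expFactor b v := by
  have : exp (-v) ≤ 1 := exp_le_one_iff.2 (neg_nonpos.2 hv)
  cases b <;> simp only [expFactor, Bool.false_eq_true, ↓reduceIte, one_mul, neg_mul] <;>
    linarith [exp_pos (-v)]

lemma expFactor_le {b : Bool} {v : ℝ} (hv : 0 < v) :
    expFactor b v ≤ (1 + exp (-v)) / 2 * (if b then v / 2 else 1) := by
  cases b
  · simp [expFactor]
  · calc expFactor true v = Aconst v * (v / 2) := by simp [expFactor, Aconst_mul_half hv.ne']; ring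
      _ ≤ _ := by simp only [if_true]; gcongr; exact Aconst_le v

lemma Aconst_mul_le_expFactor {b : Bool} {v : ℝ} (hv : v ≠ 0) :
    Aconst v * (if b then v / 2 else 1) ≤ expFactor b v := by
  cases b
  · simpa [expFactor] using Aconst_le v
  · simp [expFactor, Aconst_mul_half hv, sub_eq_add_neg]

lemma walshCoeff_exp_neg_mul_zero {u : ℝ} (hu : u ≠ 0) :
    walshCoeff (fun x => exp (-u * x)) 0 = Aconst u := by
  simpa [walshCoeff, walsh] using integral_exp_neg_mul hu

lemma walshCoeff_exp_neg_mul_eq_mul (u : ℝ) (k : ℕ) :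
    walshCoeff (fun x => exp (-u * x)) k
      = expFactor (k.testBit 0) (u / 2) * walshCoeff (fun x => exp (-(u / 2) * x)) (k / 2) := by
  have hleft : (fun y => exp (-u * (y / 2))) = fun y => exp (-(u / 2) * y) := by
    ext y; ring_nf
  have hright :
      (fun y => exp (-u * ((y + 1) / 2))) = fun y => exp (-(u / 2)) * exp (-(u / 2) * y) := by
    ext y; rw [← exp_add]; ring_nf
  rw [walshCoeff_eq_halves (Continuous.intervalIntegrable (by fun_prop) _ _), hleft, hright,
    walshCoeff_const_mul, expFactor]
  ring

theorem walshCoeff_exp_neg_mul {u : ℝ} (hu : u ≠ 0) (k : ℕ) :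
    walshCoeff (fun x => exp (-u * x)) k
      = Aconst (u / 2 ^ k.size)
        * ∏ i ∈ range k.size, expFactor (k.testBit i) (u / 2 ^ (i + 1)) := by
  induction k using Nat.strong_induction_on generalizing u with
  | _ k ih =>
  rcases eq_or_ne k 0 with rfl | hk
  · simpa using walshCoeff_exp_neg_mul_zero hu
  rw [walshCoeff_exp_neg_mul_eq_mul,
    ih (k / 2) (Nat.div_lt_self (Nat.pos_of_ne_zero hk) one_lt_two) (div_ne_zero hu two_ne_zero),
    Nat.size_eq_size_div_two_add_one hk, prod_range_succ']
  simp only [Nat.testBit_div_two, div_div, ← pow_succ']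
  ring_nf

lemma rpow_neg_muWeight {u : ℝ} (hu : 0 < u) (k : ℕ) :
    (2 : ℝ) ^ (-muWeight u k)
      = ∏ i ∈ range k.size, if k.testBit i then u / 2 ^ (i + 1) / 2 else 1 := by
  rw [muWeight, ← sum_neg_distrib, rpow_sum_of_pos two_pos]
  refine prod_congr rfl fun i _ => ?_
  split_ifs
  · rw [neg_sub, rpow_sub two_pos, rpow_logb two_pos (by norm_num) hu, div_div, ← pow_succ]
    norm_cast
  · simp

noncomputable def BconstTerm (u : ℝ) (w : ℕ) : ℝ :=
  Aconst (u / 2 ^ w) * ∏ i ∈ range w, Aconst (u / 2 ^ (i + 1))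

lemma BconstTerm_nonneg (u : ℝ) (w : ℕ) : 0 ≤ BconstTerm u w :=
  mul_nonneg (Aconst_nonneg _) (prod_nonneg fun _ _ => Aconst_nonneg _)

lemma Bconst_eq_iInf_BconstTerm (u : ℝ) : Bconst u = ⨅ w : {w : ℕ // 1 ≤ w}, BconstTerm u w := by
  have hpow : ∀ j : ℕ, (2 : ℝ) ^ (-(j : ℤ)) * u = u / 2 ^ j := fun j => by
    rw [zpow_neg, zpow_natCast, inv_mul_eq_div]
  refine iInf_congr fun w => ?_
  rw [BconstTerm, ← Finset.Ico_add_one_right_eq_Icc, prod_Ico_eq_prod_range]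
  simp only [hpow, Aconst, Nat.add_sub_cancel, add_comm 1]

lemma BconstTerm_succ_le (u : ℝ) (w : ℕ) : BconstTerm u (w + 1) ≤ BconstTerm u w := by
  set v := u / 2 ^ (w + 1)
  have hv : u / 2 ^ w / 2 = v := by rw [div_div, ← pow_succ]
  calc BconstTerm u (w + 1) = Aconst v * Aconst v * ∏ i ∈ range w, Aconst (u / 2 ^ (i + 1)) := by
        rw [BconstTerm, prod_range_succ]; ring
    _ ≤ Aconst v * ((1 + exp (-v)) / 2) * ∏ i ∈ range w, Aconst (u / 2 ^ (i + 1)) := by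
        gcongr
        · exact prod_nonneg fun _ _ => Aconst_nonneg _
        · exact Aconst_nonneg v
        · exact Aconst_le v
    _ = BconstTerm u w := by rw [BconstTerm, Aconst_eq_Aconst_half_mul (u / 2 ^ w), hv]

lemma Bconst_le_BconstTerm (u : ℝ) (w : ℕ) : Bconst u ≤ BconstTerm u w := by
  rw [Bconst_eq_iInf_BconstTerm]
  refine (ciInf_le ⟨0, ?_⟩ ⟨max w 1, le_max_right w 1⟩).trans
    (antitone_nat_of_succ_le (BconstTerm_succ_le u) (le_max_left w 1))
  rintro _ ⟨w, rfl⟩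
  exact BconstTerm_nonneg u w

theorem walshCoeff_exp_neg_mul_le {u : ℝ} (hu : 0 < u) (k : ℕ) :
    walshCoeff (fun x => exp (-u * x)) k ≤ Aconst u * (2 : ℝ) ^ (-muWeight u k) := by
  rw [walshCoeff_exp_neg_mul hu.ne', rpow_neg_muWeight hu, Aconst_eq_mul_prod u k.size, mul_assoc,
    ← prod_mul_distrib]
  exact mul_le_mul_of_nonneg_left (prod_le_prod (fun i _ => expFactor_nonneg (by positivity))
    fun i _ => expFactor_le (by positivity)) (Aconst_nonneg _)

theorem le_walshCoeff_exp_neg_mul {u : ℝ} (hu : 0 < u) (k : ℕ) :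
    Bconst u * (2 : ℝ) ^ (-muWeight u k) ≤ walshCoeff (fun x => exp (-u * x)) k := by
  rw [walshCoeff_exp_neg_mul hu.ne', rpow_neg_muWeight hu]
  calc Bconst u * ∏ i ∈ range k.size, (if k.testBit i then u / 2 ^ (i + 1) / 2 else 1)
      ≤ BconstTerm u k.size * ∏ i ∈ range k.size,
          (if k.testBit i then u / 2 ^ (i + 1) / 2 else 1) :=
        mul_le_mul_of_nonneg_right (Bconst_le_BconstTerm u k.size)
          (prod_nonneg fun i _ => by positivity)
    _ = Aconst (u / 2 ^ k.size) * ∏ i ∈ range k.size,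
          Aconst (u / 2 ^ (i + 1)) * (if k.testBit i then u / 2 ^ (i + 1) / 2 else 1) := by
        rw [BconstTerm, prod_mul_distrib, mul_assoc]
    _ ≤ _ := by
        refine mul_le_mul_of_nonneg_left (prod_le_prod (fun i _ => ?_)
          fun i _ => Aconst_mul_le_expFactor (by positivity)) (Aconst_nonneg _)
        exact mul_nonneg (Aconst_nonneg _) (by positivity)

/-- For `u > 0` and `g_u(x) = exp (-u x)`, every Walsh coefficient satisfies
`B_u 2^{-μ_u(k)} ≤ ĝ_u(k) ≤ A_u 2^{-μ_u(k)}`, with equality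
`ĝ_u(0) = A_u 2^{-μ_u(0)}` at `k = 0`. -/
theorem walshCoeff_exp_bounds (u : ℝ) (hu : 0 < u) :
    (∀ k : ℕ,
      Bconst u * (2:ℝ) ^ (-muWeight u k)
          ≤ walshCoeff (fun x => Real.exp (-u * x)) k
      ∧ walshCoeff (fun x => Real.exp (-u * x)) k
          ≤ Aconst u * (2:ℝ) ^ (-muWeight u k))
    ∧ walshCoeff (fun x => Real.exp (-u * x)) 0
        = Aconst u * (2:ℝ) ^ (-muWeight u 0) := by
  refine ⟨fun k => ⟨le_walshCoeff_exp_neg_mul hu k, walshCoeff_exp_neg_mul_le hu k⟩, ?_⟩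
  simpa [muWeight] using walshCoeff_exp_neg_mul_zero hu.ne'
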